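/- arXiv:2112.09830 — 4 statements merged into one kernel-verified Lean document; each statement's English description precedes it below -/
import Mathlib

section
/- For a set X ⊆ 2^ω and the almost disjoint family A_X = {a_x : x ∈ X} on 2^{<ω}, where a_x = {x↾n : n ∈ ω}: if Y ⊆ X is such that there exists a set Z ⊆ 2^{<ω} with a_y ⊆* Z for all y ∈ Y and a_x ∩ Z =* ∅ for all x ∈ X∖Y, then Y is an F_σ subset of X (in the subspace topology from 2^ω). -/
open Set Topology

/-- The length-n initial segment of x : ℕ → Bool as a finite binary sequence. -/
def res (x : ℕ → Bool) (n : ℕ) : List Bool := (List.range n).map x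

/-- The branch a_x = {x↾n : n ∈ ω} ⊆ 2^{<ω}. -/
def branch (x : ℕ → Bool) : Set (List Bool) := Set.range (res x)

/-- Y is a relative G_δ subset of X. -/
def IsRelGdelta {α : Type*} [TopologicalSpace α] (X Y : Set α) : Prop :=
  ∃ U : ℕ → Set α, (∀ n, IsOpen (U n)) ∧ Y = X ∩ ⋂ n, U n

/-- Y is a relative F_σ subset of X. -/
def IsRelFsigma {α : Type*} [TopologicalSpace α] (X Y : Set α) : Prop :=
  ∃ C : ℕ → Set α, (∀ n, IsClosed (C n)) ∧ Y = X ∩ ⋃ n, C n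

/-- Z is a weak λ-set. -/
def IsWeakLambda {α : Type*} [TopologicalSpace α] (Z : Set α) : Prop :=
  ∀ Y W : Set α, Y ⊆ Z → W ⊆ Z → Y.Countable → W.Countable → Disjoint Y W →
    ∃ H ⊆ Z, IsRelGdelta Z H ∧ IsRelFsigma Z H ∧ Y ⊆ H ∧ W ⊆ Z \ H

/-- S is an F_σ subset of the whole space. -/
def IsFsigma {α : Type*} [TopologicalSpace α] (S : Set α) : Prop :=
  ∃ C : ℕ → Set α, (∀ n, IsClosed (C n)) ∧ S = ⋃ n, C n

/-!
A point `x ∈ X` lies in `Y` exactly when its initial segments `x↾m` eventually lie in `Z`.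
The set of `x` with `x↾m ∈ Z` for all `m ≥ n` is closed, because `x↾m ∈ Z` depends only on
finitely many coordinates of `x`; so `Y` is `X` intersected with a countable union of closed sets.
-/

open Filter

lemma res_injective (x : ℕ → Bool) : Function.Injective (res x) := by
  intro a b h
  simpa [res] using congrArg List.length h

lemma res_eq_ofFn (x : ℕ → Bool) (m : ℕ) : res x m = List.ofFn fun i : Fin m => x i :=
  List.ext_getElem (by simp [res]) (by simp [res])

lemma isClosed_setOf_res_mem (Z : Set (List Bool)) (m : ℕ) :
    IsClosed {x : ℕ → Bool | res x m ∈ Z} := by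
  have hcont : Continuous fun (x : ℕ → Bool) (i : Fin m) => x i :=
    continuous_pi fun i => continuous_apply (i : ℕ)
  simp only [res_eq_ofFn]
  exact (isClosed_discrete {v : Fin m → Bool | List.ofFn v ∈ Z}).preimage hcont

lemma isFsigma_setOf_eventually_res_mem (Z : Set (List Bool)) :
    IsFsigma {x : ℕ → Bool | ∀ᶠ m in atTop, res x m ∈ Z} := by
  refine ⟨fun n => ⋂ m ≥ n, {x | res x m ∈ Z}, fun n => ?_, ?_⟩
  · exact isClosed_biInter fun m _ => isClosed_setOf_res_mem Z m
  · ext x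
    simp [eventually_atTop]

lemma finite_range_inter_iff_eventually_notMem {β : Type*} {f : ℕ → β}
    (hf : Function.Injective f) (Z : Set β) :
    (range f ∩ Z).Finite ↔ ∀ᶠ m in atTop, f m ∉ Z := by
  rw [← image_preimage_eq_range_inter, finite_image_iff hf.injOn, ← Nat.cofinite_eq_atTop,
    eventually_cofinite]
  simp only [not_not]
  rfl

lemma branch_diff_finite_iff {x : ℕ → Bool} {Z : Set (List Bool)} :
    (branch x \ Z).Finite ↔ ∀ᶠ m in atTop, res x m ∈ Z :=
  (finite_range_inter_iff_eventually_notMem (res_injective x) Zᶜ).trans (by simp)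

lemma branch_inter_finite_iff {x : ℕ → Bool} {Z : Set (List Bool)} :
    (branch x ∩ Z).Finite ↔ ∀ᶠ m in atTop, res x m ∉ Z :=
  finite_range_inter_iff_eventually_notMem (res_injective x) Z

lemma IsFsigma.isRelFsigma_inter {α : Type*} [TopologicalSpace α] {S : Set α} (hS : IsFsigma S)
    (X : Set α) : IsRelFsigma X (X ∩ S) := by
  obtain ⟨C, hC, rfl⟩ := hS
  exact ⟨C, hC, rfl⟩

theorem stmt0 (X Y : Set (ℕ → Bool)) (hYX : Y ⊆ X) (Z : Set (List Bool))
    (h1 : ∀ y ∈ Y, (branch y \ Z).Finite)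
    (h2 : ∀ x ∈ X \ Y, (branch x ∩ Z).Finite) :
    IsRelFsigma X Y := by
  suffices hY : Y = X ∩ {x | ∀ᶠ m in atTop, res x m ∈ Z} by
    rw [hY]
    exact (isFsigma_setOf_eventually_res_mem Z).isRelFsigma_inter X
  ext x
  refine ⟨fun hx => ⟨hYX hx, branch_diff_finite_iff.1 (h1 x hx)⟩, fun ⟨hxX, hxZ⟩ => ?_⟩
  by_contra hxY
  have hxZc := branch_inter_finite_iff.1 (h2 x ⟨hxX, hxY⟩)
  obtain ⟨m, hin, hout⟩ := (hxZ.and hxZc).exists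
  exact hout hin
end

section
/- For a set X ⊆ 2^ω: if Y ⊆ X and both Y and X∖Y are F_σ sets relative to X, then there exists Z ⊆ 2^{<ω} such that for every y ∈ Y, {y↾n : n ∈ ω} ⊆* Z and for every x ∈ X∖Y, {x↾n : n ∈ ω} ∩ Z is finite. -/
/-!
Write `Y = X ∩ ⋃ Cₙ` and `X ∖ Y = X ∩ ⋃ Dₘ` with all `Cₙ`, `Dₘ` closed, and put a finite sequence
`s` of length `k` into `Z` when its cylinder meets some `Cₙ` with `n ≤ k` but none of
`D₀, …, Dₙ`. A point `y ∈ Y` lies in some `C_N` and outside the closed sets `D₀, …, D_N`, so all its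
long initial segments lie in `Z`. A point `x ∈ X ∖ Y` lies in some `D_M` and outside the closed sets
`C₀, …, C_{M-1}`, so a long initial segment of `x` could only enter `Z` through some `Cₙ` with
`n ≥ M`, which is excluded because its cylinder meets `D_M` at `x`.
-/

open Set Topology

open Filter
open PiNat (cylinder cylinder_anti exists_disjoint_cylinder mem_cylinder_iff mem_cylinder_iff_eq
  self_mem_cylinder)

section Cylinders

variable {E : ℕ → Type*}

theorem eventually_disjoint_cylinder [∀ n, TopologicalSpace (E n)] [∀ n, DiscreteTopology (E n)]
    {s : Set (∀ n, E n)} (hs : IsClosed s) {x : ∀ n, E n} (hx : x ∉ s) :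
    ∀ᶠ k in atTop, Disjoint s (cylinder x k) := by
  obtain ⟨n, hn⟩ := exists_disjoint_cylinder hs hx
  filter_upwards [eventually_ge_atTop n] with k hk
  exact hn.mono_right (cylinder_anti x hk)

def CylinderFavors (C D : ℕ → Set (∀ n, E n)) (x : ∀ n, E n) (k : ℕ) : Prop :=
  ∃ n ≤ k, (cylinder x k ∩ C n).Nonempty ∧ ∀ m ≤ n, Disjoint (cylinder x k) (D m)

theorem cylinderFavors_congr {C D : ℕ → Set (∀ n, E n)} {x y : ∀ n, E n} {k : ℕ}
    (h : y ∈ cylinder x k) : CylinderFavors C D y k ↔ CylinderFavors C D x k := by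
  rw [CylinderFavors, CylinderFavors, mem_cylinder_iff_eq.1 h]

variable [∀ n, TopologicalSpace (E n)] [∀ n, DiscreteTopology (E n)]
  {C D : ℕ → Set (∀ n, E n)} {x : ∀ n, E n}

theorem eventually_cylinderFavors (hD : ∀ m, IsClosed (D m)) {N : ℕ} (hxC : x ∈ C N)
    (hxD : ∀ m, x ∉ D m) : ∀ᶠ k in atTop, CylinderFavors C D x k := by
  have hmiss : ∀ᶠ k in atTop, ∀ m ∈ Iic N, Disjoint (D m) (cylinder x k) :=
    (eventually_all_finite (finite_Iic N)).2 fun m _ => eventually_disjoint_cylinder (hD m) (hxD m)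
  filter_upwards [eventually_ge_atTop N, hmiss] with k hNk hk
  exact ⟨N, hNk, ⟨x, self_mem_cylinder x k, hxC⟩, fun m hm => (hk m hm).symm⟩

theorem eventually_not_cylinderFavors (hC : ∀ n, IsClosed (C n)) {M : ℕ} (hxD : x ∈ D M)
    (hxC : ∀ n, x ∉ C n) : ∀ᶠ k in atTop, ¬CylinderFavors C D x k := by
  have hmiss : ∀ᶠ k in atTop, ∀ n ∈ Iio M, Disjoint (C n) (cylinder x k) :=
    (eventually_all_finite (finite_Iio M)).2 fun n _ => eventually_disjoint_cylinder (hC n) (hxC n)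
  filter_upwards [hmiss] with k hk
  rintro ⟨n, -, ⟨z, hzx, hzC⟩, hD⟩
  rcases lt_or_ge n M with hnM | hMn
  · exact (hk n hnM).ne_of_mem hzC hzx rfl
  · exact (hD M hMn).ne_of_mem (self_mem_cylinder x k) hxD rfl

end Cylinders

theorem res_length (x : ℕ → Bool) (k : ℕ) : (res x k).length = k := by
  simp [res]

theorem res_eq_res_iff_mem_cylinder {x y : ℕ → Bool} {k : ℕ} :
    res y k = res x k ↔ y ∈ cylinder x k := by
  simp [res, mem_cylinder_iff]

theorem finite_branch_inter_of_eventually_notMem {x : ℕ → Bool} {S : Set (List Bool)}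
    (h : ∀ᶠ k in atTop, res x k ∉ S) : (branch x ∩ S).Finite := by
  rw [← Nat.cofinite_eq_atTop, eventually_cofinite] at h
  refine (h.image (res x)).subset ?_
  rintro _ ⟨⟨k, rfl⟩, hk⟩
  exact ⟨k, not_not.2 hk, rfl⟩

def favoredWords (C D : ℕ → Set (ℕ → Bool)) : Set (List Bool) :=
  {s | ∃ y, res y s.length = s ∧ CylinderFavors C D y s.length}

theorem res_mem_favoredWords {C D : ℕ → Set (ℕ → Bool)} {x : ℕ → Bool} {k : ℕ} :
    res x k ∈ favoredWords C D ↔ CylinderFavors C D x k := by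
  simp only [favoredWords, mem_ofPred_eq, res_length]
  refine ⟨fun ⟨y, hy, hfav⟩ => ?_, fun hfav => ⟨x, rfl, hfav⟩⟩
  exact (cylinderFavors_congr (res_eq_res_iff_mem_cylinder.1 hy)).1 hfav

theorem stmt1 (X Y : Set (ℕ → Bool)) (hYX : Y ⊆ X)
    (hY : IsRelFsigma X Y) (hC : IsRelFsigma X (X \ Y)) :
    ∃ Z : Set (List Bool),
      (∀ y ∈ Y, (branch y \ Z).Finite) ∧ (∀ x ∈ X \ Y, (branch x ∩ Z).Finite) := by
  obtain ⟨C, hCcl, hYeq⟩ := hY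
  obtain ⟨D, hDcl, hXYeq⟩ := hC
  refine ⟨favoredWords C D, fun y hy => ?_, fun x hx => ?_⟩
  · obtain ⟨N, hyC⟩ := mem_iUnion.1 (hYeq.subset hy).2
    have hyD : ∀ m, y ∉ D m := fun m hm => (hXYeq.superset ⟨hYX hy, mem_iUnion_of_mem m hm⟩).2 hy
    refine finite_branch_inter_of_eventually_notMem ?_
    filter_upwards [eventually_cylinderFavors hDcl hyC hyD] with k hk
    exact not_not.2 (res_mem_favoredWords.2 hk)
  · obtain ⟨M, hxD⟩ := mem_iUnion.1 (hXYeq.subset hx).2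
    have hxC : ∀ n, x ∉ C n := fun n hn => hx.2 (hYeq.superset ⟨hx.1, mem_iUnion_of_mem n hn⟩)
    refine finite_branch_inter_of_eventually_notMem ?_
    filter_upwards [eventually_not_cylinderFavors hCcl hxD hxC] with k hk
    exact fun hmem => hk (res_mem_favoredWords.1 hmem)
end

section
/- Every weak λ-set Z of a Polish space X is perfectly meager: for every perfect set P ⊆ X, Z ∩ P is meager in P (with the subspace topology). -/
/-! Let `K` be the set of condensation points of `Z` that lie in `Z`; by second countability
`Z \ K` is countable, and every neighbourhood of a point of `K` meets `K` uncountably. Hence `K`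
contains two disjoint countable sets `D₀`, `D₁`, each dense in `K`. A set `H` that is relatively
`G_δ` and `F_σ` in `Z` and separates `D₀` from `D₁` covers `K` by countably many closed sets
`(U n)ᶜ ∩ closure D₀` and `C n ∩ closure D₁`, each missing a dense subset of itself, hence
nowhere dense. In a perfect set countable sets are meagre as well. Being a weak λ-set passes to
preimages under continuous injections, so all of this can be done inside the subspace `P`. -/

open Set Topology

section Meagre

variable {X : Type*} [TopologicalSpace X]

theorem IsClosed.isNowhereDense_inter_closure {F D : Set X} (hF : IsClosed F)
    (hD : Disjoint D F) : IsNowhereDense (F ∩ closure D) := by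
  rw [(hF.inter isClosed_closure).isNowhereDense_iff, ← subset_empty_iff]
  calc interior (F ∩ closure D) ⊆ interior (F ∩ closure D) ∩ closure D :=
        subset_inter subset_rfl (interior_subset.trans inter_subset_right)
    _ ⊆ closure (interior (F ∩ closure D) ∩ D) := isOpen_interior.inter_closure
    _ ⊆ closure (F ∩ D) := closure_mono <| inter_subset_inter_left _ <|
        interior_subset.trans inter_subset_left
    _ = ∅ := by rw [inter_comm, hD.inter_eq, closure_empty]

theorem IsRelGdelta.isMeagre_diff_inter_closure {Z H D : Set X} (hH : IsRelGdelta Z H)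
    (hD : D ⊆ H) : IsMeagre ((Z \ H) ∩ closure D) := by
  obtain ⟨U, hU, rfl⟩ := hH
  have hDU : ∀ n, Disjoint D (U n)ᶜ := fun n =>
    disjoint_compl_right_iff_subset.mpr <| hD.trans <| inter_subset_right.trans (iInter_subset _ n)
  refine (isMeagre_iUnion fun n =>
    ((hU n).isClosed_compl.isNowhereDense_inter_closure (hDU n)).isMeagre).mono ?_
  rintro x ⟨⟨hxZ, hxH⟩, hxD⟩
  obtain ⟨n, hn⟩ : ∃ n, x ∉ U n := by simpa [hxZ] using hxH
  exact mem_iUnion.mpr ⟨n, hn, hxD⟩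

theorem IsRelFsigma.isMeagre_inter_closure {Z H D : Set X} (hH : IsRelFsigma Z H)
    (hD : D ⊆ Z \ H) : IsMeagre (H ∩ closure D) := by
  obtain ⟨C, hC, rfl⟩ := hH
  have hDC : ∀ n, Disjoint D (C n) := fun n =>
    disjoint_left.mpr fun _ hx hxC => (hD hx).2 ⟨(hD hx).1, mem_iUnion.mpr ⟨n, hxC⟩⟩
  refine (isMeagre_iUnion fun n => ((hC n).isNowhereDense_inter_closure (hDC n)).isMeagre).mono ?_
  rintro x ⟨⟨-, hxC⟩, hxD⟩
  obtain ⟨n, hn⟩ := mem_iUnion.mp hxC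
  exact mem_iUnion.mpr ⟨n, hn, hxD⟩

theorem Set.Countable.isMeagre [T1Space X] [PerfectSpace X] {s : Set X} (hs : s.Countable) :
    IsMeagre s := by
  rw [← biUnion_of_singleton s]
  exact isMeagre_biUnion hs fun x _ =>
    (isClosed_singleton.isNowhereDense_iff.mpr (interior_singleton x)).isMeagre

end Meagre

section Condensation

variable {X : Type*} [TopologicalSpace X]

def condensationKernel (s : Set X) : Set X :=
  {x ∈ s | ∀ U ∈ 𝓝 x, ¬(U ∩ s).Countable}

theorem countable_diff_condensationKernel [SecondCountableTopology X] (s : Set X) :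
    (s \ condensationKernel s).Countable := by
  -- `cocountable` is registered only as a `CardinalInterFilter` for `ℵ₁`
  have : CountableInterFilter (Filter.cocountable : Filter X) :=
    cardinalInterFilter_aleph_one_iff.mp inferInstance
  rw [← compl_compl (s \ _), ← Filter.mem_cocountable]
  refine (HereditarilyLindelofSpace.isLindelof _).compl_mem_sets_of_nhdsWithin fun x hx => ?_
  obtain ⟨U, hU, hUs⟩ : ∃ U ∈ 𝓝 x, (U ∩ s).Countable := by
    simpa [condensationKernel, hx.1] using hx.2
  exact ⟨(s \ condensationKernel s) ∩ U, inter_mem_nhdsWithin _ hU, by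
    rw [Filter.mem_cocountable, compl_compl]
    exact hUs.mono fun y hy => mem_inter hy.2 hy.1.1⟩

theorem not_countable_inter_condensationKernel [SecondCountableTopology X] {s U : Set X} {x : X}
    (hx : x ∈ condensationKernel s) (hU : U ∈ 𝓝 x) :
    ¬(U ∩ condensationKernel s).Countable := fun hcount =>
  hx.2 U hU <| (hcount.union (countable_diff_condensationKernel s)).mono fun y ⟨hyU, hys⟩ =>
    (em (y ∈ condensationKernel s)).elim (fun hy => .inl ⟨hyU, hy⟩) fun hy => .inr ⟨hys, hy⟩

theorem exists_countable_subset_subset_closure [SecondCountableTopology X] (s : Set X) :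
    ∃ t ⊆ s, t.Countable ∧ s ⊆ closure t := by
  obtain ⟨t, htc, htd⟩ := TopologicalSpace.exists_countable_dense s
  exact ⟨(↑) '' t, Subtype.coe_image_subset s t, htc.image _, Subtype.dense_iff.mp htd⟩

theorem exists_disjoint_countable_subsets_closure [SecondCountableTopology X] (s : Set X) :
    ∃ D₀ ⊆ s, ∃ D₁ ⊆ s, D₀.Countable ∧ D₁.Countable ∧ Disjoint D₀ D₁ ∧
      (s \ (closure D₀ ∩ closure D₁)).Countable := by
  set K := condensationKernel s
  obtain ⟨D₀, hD₀K, hD₀, hKD₀⟩ := exists_countable_subset_subset_closure K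
  obtain ⟨D₁, hD₁K, hD₁, hKD₁⟩ := exists_countable_subset_subset_closure (K \ D₀)
  have hK : K ⊆ closure (K \ D₀) := fun x hx => mem_closure_iff_nhds.mpr fun U hU => by
    by_contra hempty
    refine not_countable_inter_condensationKernel hx hU (hD₀.mono fun y hy => ?_)
    by_contra hyD₀
    exact hempty ⟨y, hy.1, hy.2, hyD₀⟩
  refine ⟨D₀, hD₀K.trans (sep_subset _ _), D₁, hD₁K.trans (sdiff_subset.trans (sep_subset _ _)),
    hD₀, hD₁, disjoint_right.mpr fun _ hx => (hD₁K hx).2, ?_⟩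
  refine (countable_diff_condensationKernel s).mono fun x hx => mem_sdiff_of_mem hx.1 fun hxK => ?_
  exact hx.2 ⟨hKD₀ hxK, closure_minimal hKD₁ isClosed_closure (hK hxK)⟩

end Condensation

theorem IsWeakLambda.preimage {X Y : Type*} [TopologicalSpace X] [TopologicalSpace Y]
    {f : Y → X} (hf : Continuous f) (hinj : Function.Injective f) {Z : Set X}
    (hZ : IsWeakLambda Z) : IsWeakLambda (f ⁻¹' Z) := by
  intro A B hA hB hAc hBc hAB
  obtain ⟨H, hHZ, ⟨U, hU, hHU⟩, ⟨C, hC, hHC⟩, hAH, hBH⟩ :=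
    hZ (f '' A) (f '' B) (image_subset_iff.mpr hA) (image_subset_iff.mpr hB) (hAc.image f)
      (hBc.image f) ((disjoint_image_iff hinj).mpr hAB)
  refine ⟨f ⁻¹' H, preimage_mono hHZ, ⟨fun n => f ⁻¹' U n, fun n => (hU n).preimage hf, ?_⟩,
    ⟨fun n => f ⁻¹' C n, fun n => (hC n).preimage hf, ?_⟩,
    image_subset_iff.mp hAH, preimage_sdiff f Z H ▸ image_subset_iff.mp hBH⟩
  · rw [hHU, preimage_inter, preimage_iInter]
  · rw [hHC, preimage_inter, preimage_iUnion]

theorem IsWeakLambda.isMeagre {X : Type*} [TopologicalSpace X] [SecondCountableTopology X]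
    [T1Space X] [PerfectSpace X] {Z : Set X} (hZ : IsWeakLambda Z) : IsMeagre Z := by
  obtain ⟨D₀, hD₀Z, D₁, hD₁Z, hD₀, hD₁, hdisj, hE⟩ := exists_disjoint_countable_subsets_closure Z
  obtain ⟨H, -, hHδ, hHσ, hD₀H, hD₁H⟩ := hZ D₀ D₁ hD₀Z hD₁Z hD₀ hD₁ hdisj
  refine (hE.isMeagre.union ((hHδ.isMeagre_diff_inter_closure hD₀H).union
    (hHσ.isMeagre_inter_closure hD₁H))).mono fun x hxZ => ?_
  by_cases hx : x ∈ closure D₀ ∩ closure D₁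
  · by_cases hxH : x ∈ H
    · exact .inr (.inr ⟨hxH, hx.2⟩)
    · exact .inr (.inl ⟨⟨hxZ, hxH⟩, hx.1⟩)
  · exact .inl ⟨hxZ, hx⟩

theorem Preperfect.perfectSpace {X : Type*} [TopologicalSpace X] {P : Set X}
    (hP : Preperfect P) : PerfectSpace P := by
  refine ⟨preperfect_iff_nhds.mpr fun x _ U hU => ?_⟩
  obtain ⟨u, hu, huU⟩ := (mem_nhds_subtype P x U).mp hU
  obtain ⟨y, ⟨hyu, hyP⟩, hyx⟩ := preperfect_iff_nhds.mp hP x x.2 u hu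
  exact ⟨⟨y, hyP⟩, ⟨huU hyu, mem_univ _⟩, fun h => hyx (congrArg Subtype.val h)⟩

theorem stmt5_general {α : Type*} [TopologicalSpace α] [PolishSpace α] (Z : Set α)
    (h : IsWeakLambda Z) (P : Set α) (hP : Perfect P) :
    IsMeagre (Subtype.val ⁻¹' Z : Set P) :=
  have := hP.acc.perfectSpace
  (h.preimage continuous_subtype_val Subtype.val_injective).isMeagre

theorem stmt5 {α : Type*} [TopologicalSpace α] [PolishSpace α] (Z : Set α)
    (h : IsWeakLambda Z) (P : Set α) (hP : Perfect P) (hne : P.Nonempty) :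
    IsMeagre (Subtype.val ⁻¹' Z : Set P) :=
  stmt5_general Z h P hP
end

section
/- If X ⊆ 2^ω is concentrated on each of two disjoint countable sets F₀, F₁ ⊆ 2^ω (meaning: for every open U ⊇ F_i, X∖U is countable, for i = 0,1) and F₀, F₁ ⊆ X with F₀, F₁ infinite, then X is not a weak λ-set. -/
open Set Topology

/-!
A set `H` separating `F₀` from `F₁` in `X` and relatively `G_δ` contains `F₀` in the trace of
countably many open sets, so concentration on `F₀` leaves only countably many points of `X`
outside `H`. If `H` is also relatively `F_σ`, then `X \ H` is relatively `G_δ` and contains `F₁`,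
so concentration on `F₁` makes `H` countable as well. Hence `X` would be countable.
-/

variable {α : Type*} [TopologicalSpace α]

def IsConcentratedOn (X F : Set α) : Prop :=
  ∀ U : Set α, IsOpen U → F ⊆ U → (X \ U).Countable

theorem IsConcentratedOn.countable_diff_of_isRelGdelta {X F H : Set α}
    (hX : IsConcentratedOn X F) (hH : IsRelGdelta X H) (hFH : F ⊆ H) : (X \ H).Countable := by
  obtain ⟨U, hUo, rfl⟩ := hH
  have hFU : ∀ n, F ⊆ U n := fun n => hFH.trans <| inter_subset_right.trans (iInter_subset U n)
  refine (countable_iUnion fun n => hX (U n) (hUo n) (hFU n)).mono ?_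
  rintro x ⟨hxX, hxH⟩
  obtain ⟨n, hn⟩ : ∃ n, x ∉ U n := by simpa [hxX] using hxH
  exact mem_iUnion.2 ⟨n, hxX, hn⟩

theorem IsRelFsigma.isRelGdelta_diff {X H : Set α} (hH : IsRelFsigma X H) :
    IsRelGdelta X (X \ H) := by
  obtain ⟨C, hC, rfl⟩ := hH
  refine ⟨fun n => (C n)ᶜ, fun n => (hC n).isOpen_compl, ?_⟩
  ext x
  simp

theorem stmt7_general (X F₀ F₁ : Set (ℕ → Bool)) (hX : ¬ X.Countable)
    (h0 : F₀ ⊆ X) (h1 : F₁ ⊆ X) (hc0 : F₀.Countable) (hc1 : F₁.Countable)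
    (hd : Disjoint F₀ F₁)
    (hcon0 : ∀ U : Set (ℕ → Bool), IsOpen U → F₀ ⊆ U → (X \ U).Countable)
    (hcon1 : ∀ U : Set (ℕ → Bool), IsOpen U → F₁ ⊆ U → (X \ U).Countable) :
    ¬ IsWeakLambda X := by
  intro hw
  obtain ⟨H, -, hGδ, hFσ, hF₀H, hF₁XH⟩ := hw F₀ F₁ h0 h1 hc0 hc1 hd
  have hout : (X \ H).Countable :=
    IsConcentratedOn.countable_diff_of_isRelGdelta hcon0 hGδ hF₀H
  have hin : (X \ (X \ H)).Countable :=
    IsConcentratedOn.countable_diff_of_isRelGdelta hcon1 hFσ.isRelGdelta_diff hF₁XH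
  rw [sdiff_sdiff_right_self] at hin
  exact hX <| sdiff_union_inter X H ▸ hout.union hin

theorem stmt7 (X F₀ F₁ : Set (ℕ → Bool)) (hX : ¬ X.Countable)
    (h0 : F₀ ⊆ X) (h1 : F₁ ⊆ X) (hc0 : F₀.Countable) (hc1 : F₁.Countable)
    (hi0 : F₀.Infinite) (hi1 : F₁.Infinite) (hd : Disjoint F₀ F₁)
    (hcon0 : ∀ U : Set (ℕ → Bool), IsOpen U → F₀ ⊆ U → (X \ U).Countable)
    (hcon1 : ∀ U : Set (ℕ → Bool), IsOpen U → F₁ ⊆ U → (X \ U).Countable) :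
    ¬ IsWeakLambda X :=
  stmt7_general X F₀ F₁ hX h0 h1 hc0 hc1 hd hcon0 hcon1
end
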